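/- arXiv:2208.02212 — 3 statements merged into one kernel-verified Lean document; each statement's English description precedes it below -/
import Mathlib

section
/- Let n ≥ 1 and let a = (a₀, a₁, …, a_{n−1}) ∈ ℝ^n, viewed as an n×1 matrix parametrizing the affine hyperplane 𝓛_a = {(x, a₀ + a₁x₁ + ⋯ + a_{n−1}x_{n−1}) : x ∈ ℝ^{n−1}} ⊆ ℝ^n. Then a ∉ ℚ^n if and only if for Lebesgue-almost every x ∈ ℝ^{n−1} the vector (x, a₀ + a₁x₁ + ⋯ + a_{n−1}x_{n−1}) ∈ ℝ^n is not singular. -/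
/-!
If `a ∈ ℚ^{d+1}`, clearing denominators gives a nonzero `q ∈ ℤ^{d+1}` and `q₀ ∈ ℤ` with
`q · (x, a₀ + a' · x) + q₀ = 0` for all `x`, so every point of `𝓛_a` is singular.

Conversely, write `q · (x, a₀ + a' · x) = b(q) · x + q_d a₀` with `b(q) = q' + q_d a'`. On the box
`[-R, R]^d`, the points where some `0 < ‖q‖ ≤ N` makes this form `ε = c / N^{d+1}`-close to an
integer lie in the slabs `|b(q) · x + q_d a₀ + m| < ε`. The at most `(2N+1)^{d+1}` forms with
`‖b(q)‖ ≥ 1/2` cover volume `O(N^{d+1} ε) = O(c)`; the others are determined by `q_d`, so there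
are at most `2N + 1` of them. If a coordinate `α` of `a` is irrational, a descent on
approximations shows that `|m α + p| ≥ 1/(4N)` for all `0 < |m| ≤ N` and `p ∈ ℤ` at infinitely
many heights `N`. At such `N` each of the few remaining forms has a coefficient `≥ 1/(4N)` (if `α`
is a slope), or `≥ 1/D` (if all slopes are rational with common denominator `D`), or has
`b(q) = 0` and then never comes `ε`-close to an integer (if `α = a₀`); so they too cover volume
`O(c)`. A singular point of the box lies in these sets for all large `N`, hence the singular
points of the box have measure `O(c)` for every `c > 0`.
-/

open MeasureTheory Filter

/-- A vector `x ∈ ℝ^n` is singular. -/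
def IsSingularVec {n : ℕ} (x : Fin n → ℝ) : Prop :=
  ∀ c : ℝ, 0 < c → ∃ Q₀ : ℝ, 0 < Q₀ ∧ ∀ Q : ℝ, Q₀ ≤ Q →
    ∃ q : Fin n → ℤ, q ≠ 0 ∧ ∃ q₀ : ℤ,
      |(∑ i, (q i : ℝ) * x i) + (q₀ : ℝ)| < c / Q ^ n ∧ ∀ i, |(q i : ℝ)| ≤ Q

open Topology

lemma abs_mul_eq_of_cross_lt_one (α : ℝ) {m₀ p₀ m₁ p₁ : ℤ}
    (h : |(m₀ : ℝ)| * |m₁ * α + p₁| + |(m₁ : ℝ)| * |m₀ * α + p₀| < 1) :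
    |(m₁ : ℝ)| * |m₀ * α + p₀| = |(m₀ : ℝ)| * |m₁ * α + p₁| := by
  have hdet : m₀ * p₁ = m₁ * p₀ := by
    have hR : |((m₀ * p₁ - m₁ * p₀ : ℤ) : ℝ)| < 1 := by
      have : ((m₀ * p₁ - m₁ * p₀ : ℤ) : ℝ) = m₀ * (m₁ * α + p₁) - m₁ * (m₀ * α + p₀) := by
        push_cast; ring
      rw [this]
      refine (abs_sub _ _).trans_lt ?_
      rwa [abs_mul, abs_mul]
    have : |m₀ * p₁ - m₁ * p₀| < 1 := by exact_mod_cast hR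
    linarith [Int.abs_lt_one_iff.1 this]
  rw [← abs_mul, ← abs_mul]
  congr 1
  have : (m₀ : ℝ) * p₁ = m₁ * p₀ := by exact_mod_cast hdet
  linear_combination -this

lemma Irrational.exists_abs_lt_of_forall_exists {α : ℝ} (hα : Irrational α) {N₁ : ℕ}
    (h : ∀ N ≥ N₁, ∃ m p : ℤ, m ≠ 0 ∧ |m| ≤ N ∧ |m * α + p| < 1 / (4 * N)) {N₀ : ℕ} {m₀ p₀ : ℤ}
    (hN₀ : N₁ ≤ N₀) (hm₀ : m₀ ≠ 0) (hm₀N : |m₀| ≤ N₀) (hδ₀ : |m₀ * α + p₀| < 1 / (4 * N₀)) :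
    ∃ N ≥ N₁, ∃ m p : ℤ, (m ≠ 0 ∧ |m| ≤ N ∧ |m * α + p| < 1 / (4 * N)) ∧ |m| < |m₀| := by
  set δ₀ := |m₀ * α + p₀|
  have hδ₀pos : 0 < δ₀ := abs_pos.2 ((hα.intCast_mul hm₀).add_intCast p₀).ne_zero
  -- the witness at height `N ≈ 1 / (4 δ₀)` is proportional to `(m₀, p₀)` and has smaller error
  set N := N₁ + ⌈1 / (4 * δ₀)⌉₊
  obtain ⟨m₁, p₁, hm₁, hm₁N, hδ₁⟩ := h N (Nat.le_add_right _ _)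
  set δ₁ := |m₁ * α + p₁|
  have hm₀R : (1 : ℝ) ≤ |(m₀ : ℝ)| := by exact_mod_cast Int.one_le_abs hm₀
  have hN₀R : (1 : ℝ) ≤ N₀ := hm₀R.trans (by exact_mod_cast hm₀N)
  have hN₀δ₀ : N₀ * δ₀ < 1 / 4 := by
    rw [lt_div_iff₀ (by positivity)] at hδ₀; linarith
  have hm₀δ₀ : |(m₀ : ℝ)| * δ₀ < 1 / 4 :=
    lt_of_le_of_lt (mul_le_mul_of_nonneg_right (by exact_mod_cast hm₀N) hδ₀pos.le) hN₀δ₀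
  have hceil : 1 / (4 * δ₀) ≤ N := (Nat.le_ceil _).trans (by simp [N])
  have hδ₁δ₀ : δ₁ < δ₀ := by
    refine hδ₁.trans_le ?_
    rw [div_le_iff₀ (by positivity)] at hceil ⊢
    linarith
  have hm₁δ₀ : |(m₁ : ℝ)| * δ₀ < 3 / 4 := by
    have hm₁N' : |(m₁ : ℝ)| ≤ N₁ + (1 / (4 * δ₀) + 1) := by
      have := (Nat.ceil_lt_add_one (by positivity : 0 ≤ 1 / (4 * δ₀))).le
      have h' : |(m₁ : ℝ)| ≤ N := by exact_mod_cast hm₁N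
      push_cast [N] at h'
      linarith
    have hN₁δ₀ : N₁ * δ₀ ≤ N₀ * δ₀ := mul_le_mul_of_nonneg_right (by exact_mod_cast hN₀) hδ₀pos.le
    have : (1 / (4 * δ₀) + 1) * δ₀ = 1 / 4 + δ₀ := by field_simp
    nlinarith
  have hprop : |(m₁ : ℝ)| * δ₀ = |(m₀ : ℝ)| * δ₁ :=
    abs_mul_eq_of_cross_lt_one α (by nlinarith [abs_nonneg (m₀ : ℝ)])
  have hlt : |(m₁ : ℝ)| < |(m₀ : ℝ)| := by
    refine lt_of_mul_lt_mul_right (?_ : |(m₁ : ℝ)| * δ₀ < |(m₀ : ℝ)| * δ₀) hδ₀pos.le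
    rw [hprop]; exact mul_lt_mul_of_pos_left hδ₁δ₀ (by linarith)
  exact ⟨N, Nat.le_add_right _ _, m₁, p₁, ⟨hm₁, hm₁N, hδ₁⟩, by exact_mod_cast hlt⟩

theorem Irrational.frequently_one_div_le_abs_mul_add {α : ℝ} (hα : Irrational α) :
    ∃ᶠ N : ℕ in atTop, ∀ m p : ℤ, m ≠ 0 → |m| ≤ N → 1 / (4 * N) ≤ |m * α + p| := by
  by_contra h
  obtain ⟨N₁, hN₁⟩ := eventually_atTop.1 (not_frequently.1 h)
  push Not at hN₁
  set W : Set (ℕ × ℤ × ℤ) := {w | N₁ ≤ w.1 ∧ w.2.1 ≠ 0 ∧ |w.2.1| ≤ w.1 ∧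
    |w.2.1 * α + w.2.2| < 1 / (4 * w.1)}
  obtain ⟨m, p, hm, hmN, hmp⟩ := hN₁ N₁ le_rfl
  obtain ⟨⟨N₀, m₀, p₀⟩, ⟨hN₀, hm₀, hm₀N, hδ₀⟩, hmin⟩ :=
    (measure fun w : ℕ × ℤ × ℤ => w.2.1.natAbs).wf.has_min W ⟨(N₁, m, p), le_rfl, hm, hmN, hmp⟩
  obtain ⟨N, hN, m₁, p₁, hw, hlt⟩ := hα.exists_abs_lt_of_forall_exists hN₁ hN₀ hm₀ hm₀N hδ₀
  refine hmin (N, m₁, p₁) ⟨hN, hw⟩ ?_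
  show m₁.natAbs < m₀.natAbs
  rw [Int.abs_eq_natAbs, Int.abs_eq_natAbs] at hlt
  exact_mod_cast hlt

lemma exists_pos_forall_mul_eq_intCast {ι : Type*} [Fintype ι] {a : ι → ℝ}
    (ha : ∀ i, ∃ r : ℚ, a i = r) : ∃ D : ℕ, 0 < D ∧ ∀ i, ∃ z : ℤ, a i * D = z := by
  choose r hr using ha
  refine ⟨∏ i, (r i).den, Finset.prod_pos fun i _ => (r i).pos, fun i => ?_⟩
  obtain ⟨k, hk⟩ := Finset.dvd_prod_of_mem (fun i => (r i).den) (Finset.mem_univ i)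
  refine ⟨(r i).num * k, ?_⟩
  rw [hr i, hk, Rat.cast_def]
  have : ((r i).den : ℝ) ≠ 0 := by exact_mod_cast (r i).den_nz
  push_cast
  field_simp

lemma one_div_le_abs_of_mul_eq_intCast {y : ℝ} {D : ℕ} {z : ℤ} (hD : 0 < D) (h : y * D = z)
    (hy : y ≠ 0) : 1 / D ≤ |y| := by
  have hz : z ≠ 0 := by rintro rfl; simp_all
  have : |y| * D = |(z : ℝ)| := by rw [← h, abs_mul, Nat.abs_cast]
  rw [div_le_iff₀ (by positivity), this]
  exact_mod_cast Int.one_le_abs hz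

section Hyperplane

variable {d : ℕ} (a : Fin (d + 1) → ℝ)

def hyperplanePoint (x : Fin d → ℝ) : Fin (d + 1) → ℝ :=
  Fin.snoc x (a 0 + ∑ i : Fin d, a i.succ * x i)

def linCoeff (q : Fin (d + 1) → ℤ) (i : Fin d) : ℝ :=
  q i.castSucc + q (Fin.last d) * a i.succ

lemma sum_mul_hyperplanePoint (q : Fin (d + 1) → ℤ) (x : Fin d → ℝ) :
    ∑ i, (q i : ℝ) * hyperplanePoint a x i =
      ∑ i, linCoeff a q i * x i + q (Fin.last d) * a 0 := by
  simp only [hyperplanePoint, linCoeff, Fin.sum_univ_castSucc, Fin.snoc_castSucc, Fin.snoc_last,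
    add_mul, Finset.sum_add_distrib, mul_add, Finset.mul_sum]
  ring_nf

variable {a}

lemma eq_of_linCoeff_lt {q q' : Fin (d + 1) → ℤ} (hlast : q (Fin.last d) = q' (Fin.last d))
    (hq : ∀ i, |linCoeff a q i| < 1 / 2) (hq' : ∀ i, |linCoeff a q' i| < 1 / 2) : q = q' := by
  funext i
  induction i using Fin.lastCases with
  | last => exact hlast
  | cast j =>
    have hdiff : ((q j.castSucc - q' j.castSucc : ℤ) : ℝ) = linCoeff a q j - linCoeff a q' j := by
      simp only [linCoeff, hlast]; push_cast; ring
    have : |((q j.castSucc - q' j.castSucc : ℤ) : ℝ)| < 1 := by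
      rw [hdiff]; linarith [abs_sub (linCoeff a q j) (linCoeff a q' j), hq j, hq' j]
    exact sub_eq_zero.1 (Int.abs_lt_one_iff.1 (by exact_mod_cast this))

lemma last_ne_zero_of_linCoeff_lt {q : Fin (d + 1) → ℤ} (hq : q ≠ 0)
    (hlt : ∀ i, |linCoeff a q i| < 1 / 2) : q (Fin.last d) ≠ 0 :=
  fun h => hq (eq_of_linCoeff_lt (q' := 0) h hlt (by simp [linCoeff]))

variable (a)

def IsGoodHeight (N : ℕ) (γ : ℝ) : Prop :=
  ∀ q : Fin (d + 1) → ℤ, q ≠ 0 → (∀ i, |q i| ≤ N) → (∀ i, |linCoeff a q i| < 1 / 2) →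
    (∃ j, γ ≤ |linCoeff a q j|) ∨
      (linCoeff a q = 0 ∧ ∀ m : ℤ, 1 / (4 * N) ≤ |q (Fin.last d) * a 0 + m|)

variable {a}

lemma exists_frequently_isGoodHeight (ha : ∃ i, Irrational (a i)) :
    ∃ C : ℝ, ∃ᶠ N : ℕ in atTop, ∃ γ > 0, 1 / γ ≤ C * N ^ d ∧ IsGoodHeight a N γ := by
  by_cases hslope : ∃ j : Fin d, Irrational (a j.succ)
  · obtain ⟨j, hj⟩ := hslope
    refine ⟨4, (hj.frequently_one_div_le_abs_mul_add.and_eventually (eventually_gt_atTop 0)).mono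
      fun N ⟨hN, hN0⟩ => ⟨1 / (4 * N), by positivity, ?_, fun q hq hqN hlt => Or.inl ⟨j, ?_⟩⟩⟩
    · have : (N : ℝ) ≤ N ^ d := le_self_pow₀ (by exact_mod_cast hN0) (Fin.pos j).ne'
      rw [one_div_one_div]; linarith
    · have := hN _ (q j.castSucc) (last_ne_zero_of_linCoeff_lt hq hlt) (hqN _)
      rwa [linCoeff, add_comm]
  · push Not at hslope
    have hrat : ∀ j : Fin d, ∃ r : ℚ, a j.succ = r := fun j => by
      simpa [Irrational, eq_comm] using hslope j
    have h0 : Irrational (a 0) := by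
      obtain ⟨i, hi⟩ := ha
      induction i using Fin.cases with
      | zero => exact hi
      | succ j => exact absurd hi (hslope j)
    obtain ⟨D, hD, hz⟩ := exists_pos_forall_mul_eq_intCast hrat
    choose z hz using hz
    refine ⟨D, (h0.frequently_one_div_le_abs_mul_add.and_eventually (eventually_gt_atTop 0)).mono
      fun N ⟨hN, hN0⟩ => ⟨1 / D, by positivity, ?_, fun q hq hqN hlt => ?_⟩⟩
    · rw [one_div_one_div]
      exact le_mul_of_one_le_right (by positivity) (one_le_pow₀ (by exact_mod_cast hN0))
    · by_cases h : linCoeff a q = 0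
      · exact Or.inr ⟨h, fun m => hN _ m (last_ne_zero_of_linCoeff_lt hq hlt) (hqN _)⟩
      · obtain ⟨j, hj⟩ := Function.ne_iff.1 h
        refine Or.inl ⟨j, one_div_le_abs_of_mul_eq_intCast hD
          (z := q j.castSucc * D + q (Fin.last d) * z j) ?_ hj⟩
        simp only [linCoeff, add_mul, mul_assoc, hz]; push_cast; ring

end Hyperplane

lemma Finset.sum_le_ofReal_card_mul {ι : Type*} (s : Finset ι) {f : ι → ENNReal} {y : ℝ}
    (h : ∀ i ∈ s, f i ≤ ENNReal.ofReal y) : ∑ i ∈ s, f i ≤ ENNReal.ofReal (s.card * y) := by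
  rw [← nsmul_eq_mul, ENNReal.ofReal_nsmul]
  exact Finset.sum_le_card_nsmul _ _ _ h

section Slabs

variable {d : ℕ}

def boxSlab (b : Fin d → ℝ) (t R ε : ℝ) : Set (Fin d → ℝ) :=
  {x | (∀ i, |x i| ≤ R) ∧ |∑ i, b i * x i + t| < ε}

lemma volume_boxSlab_le (b : Fin d → ℝ) {j : Fin d} (hbj : b j ≠ 0) (t : ℝ) {R ε : ℝ}
    (hR : 0 ≤ R) (hε : 0 ≤ ε) :
    volume (boxSlab b t R ε) ≤ ENNReal.ofReal (2 * ε / |b j| * (2 * R) ^ (d - 1)) := by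
  classical
  set f := Matrix.toLin' ((1 : Matrix (Fin d) (Fin d) ℝ).updateRow j b)
  have hf : ∀ x, f x = Function.update x j (∑ i, b i * x i) := fun x => by
    simp [f, Matrix.updateRow_mulVec, dotProduct]
  have hdet : LinearMap.det f = b j := by
    have := Matrix.det_updateRow_sum (1 : Matrix (Fin d) (Fin d) ℝ) j b
    simp only [Matrix.det_one, smul_eq_mul, mul_one] at this
    rw [LinearMap.det_toLin', ← this]
    congr 2
    ext k
    simp [Matrix.one_apply]
  set S : Set (Fin d → ℝ) := Set.univ.pi
    (Function.update (fun _ => Set.Icc (-R) R) j (Set.Ioo (-t - ε) (-t + ε)))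
  have hsub : boxSlab b t R ε ⊆ f ⁻¹' S := by
    rintro x ⟨hbox, hslab⟩ i -
    rw [hf]
    obtain rfl | hi := eq_or_ne i j
    · simp only [Function.update_self, Set.mem_Ioo]
      constructor <;> linarith [abs_lt.1 hslab]
    · simpa [Function.update_of_ne hi, abs_le] using hbox i
  have hS : volume S = ENNReal.ofReal (2 * ε) * ENNReal.ofReal (2 * R) ^ (d - 1) := by
    rw [volume_pi_pi, ← Finset.mul_prod_erase _ _ (Finset.mem_univ j),
      Finset.prod_congr rfl fun i hi => by
        rw [Function.update_of_ne (Finset.ne_of_mem_erase hi), Real.volume_Icc]]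
    simp only [Function.update_self, Real.volume_Ioo, Finset.prod_const, Finset.mem_univ,
      Finset.card_erase_of_mem, Finset.card_univ, Fintype.card_fin]
    ring_nf
  calc _ ≤ volume (f ⁻¹' S) := measure_mono hsub
    _ = ENNReal.ofReal |b j|⁻¹ * volume S := by
      rw [Measure.addHaar_preimage_linearMap _ (hdet ▸ hbj), hdet, abs_inv]
    _ = _ := by
      rw [hS, ← ENNReal.ofReal_pow (by positivity), ← ENNReal.ofReal_mul (by positivity),
        ← ENNReal.ofReal_mul (by positivity)]
      congr 1
      ring

lemma abs_sum_mul_le_of_abs_le (b x : Fin d → ℝ) {β R : ℝ} (hb : ∀ i, |b i| ≤ β)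
    (hx : ∀ i, |x i| ≤ R) : |∑ i, b i * x i| ≤ d * R * β := by
  calc |∑ i, b i * x i| ≤ ∑ i, |b i| * |x i| := by
        simpa only [abs_mul] using Finset.abs_sum_le_sum_abs (fun i => b i * x i) Finset.univ
    _ ≤ ∑ _i : Fin d, β * R := Finset.sum_le_sum fun i _ =>
        mul_le_mul (hb i) (hx i) (abs_nonneg _) ((abs_nonneg _).trans (hb i))
    _ = d * R * β := by simp; ring

lemma card_Icc_ceil_floor_le (u : ℝ) {L : ℝ} (hL : 0 ≤ L) :
    ((Finset.Icc ⌈u - L⌉ ⌊u + L⌋).card : ℝ) ≤ 2 * L + 1 := by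
  have h : ((Finset.Icc ⌈u - L⌉ ⌊u + L⌋).card : ℝ) =
      max ((⌊u + L⌋ + 1 - ⌈u - L⌉ : ℤ) : ℝ) 0 := by
    rw [Int.card_Icc, ← Int.cast_natCast, Int.toNat_eq_max]; push_cast; rfl
  rw [h, max_le_iff]
  push_cast
  constructor <;> linarith [Int.floor_le (u + L), Int.le_ceil (u - L)]

def nearIntSet (b : Fin d → ℝ) (t R ε : ℝ) : Set (Fin d → ℝ) :=
  ⋃ m : ℤ, boxSlab b (t + m) R ε

lemma volume_nearIntSet_le (b : Fin d → ℝ) {γ : ℝ} (hγ : 0 < γ) (hb : ∃ j, γ ≤ |b j|) (t : ℝ)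
    {R ε : ℝ} (hR : 0 ≤ R) (hε : 0 ≤ ε) (hε' : ε ≤ 1 / 2) :
    volume (nearIntSet b t R ε) ≤
      ENNReal.ofReal ((2 * d * R + 2 / γ) * (2 * ε * (2 * R) ^ (d - 1))) := by
  obtain ⟨j₀, hj₀⟩ := hb
  obtain ⟨j, -, hj⟩ := Finset.exists_max_image Finset.univ (|b ·|) ⟨j₀, Finset.mem_univ _⟩
  set β := |b j|
  have hγβ : γ ≤ β := hj₀.trans (hj j₀ (Finset.mem_univ _))
  have hβ : 0 < β := hγ.trans_le hγβ
  set L := d * R * β + ε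
  set I := Finset.Icc ⌈-t - L⌉ ⌊-t + L⌋
  -- only the shifts `m` with `|t + m| ≤ L` meet the box
  have hsub : nearIntSet b t R ε ⊆ ⋃ m ∈ I, boxSlab b (t + m) R ε := by
    intro x hx
    obtain ⟨m, hbox, hm⟩ := Set.mem_iUnion.1 hx
    have hbx := abs_sum_mul_le_of_abs_le b x (fun i => hj i (Finset.mem_univ i)) hbox
    refine Set.mem_biUnion (x := m) ?_ ⟨hbox, hm⟩
    rw [Finset.mem_coe, Finset.mem_Icc, Int.ceil_le, Int.le_floor]
    constructor <;> linarith [abs_lt.1 hm, abs_le.1 hbx]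
  have hI : (I.card : ℝ) / β ≤ 2 * d * R + 2 / γ := by
    have := card_Icc_ceil_floor_le (-t) (by positivity : 0 ≤ L)
    have : 2 ≤ 2 / γ * β := by
      rw [div_mul_eq_mul_div, le_div_iff₀ hγ]; linarith
    rw [div_le_iff₀ hβ]
    nlinarith
  calc _ ≤ volume (⋃ m ∈ I, boxSlab b (t + m) R ε) := measure_mono hsub
    _ ≤ ∑ m ∈ I, volume (boxSlab b (t + m) R ε) := measure_biUnion_finset_le _ _
    _ ≤ ENNReal.ofReal (I.card * (2 * ε / β * (2 * R) ^ (d - 1))) :=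
        I.sum_le_ofReal_card_mul fun m _ => volume_boxSlab_le b (abs_pos.1 hβ) _ hR hε
    _ ≤ _ := by
        refine ENNReal.ofReal_le_ofReal ?_
        calc (I.card : ℝ) * (2 * ε / β * (2 * R) ^ (d - 1))
            = I.card / β * (2 * ε * (2 * R) ^ (d - 1)) := by ring
          _ ≤ _ := mul_le_mul_of_nonneg_right hI (by positivity)

end Slabs

lemma card_piFinset_Icc (n N : ℕ) :
    (Fintype.piFinset fun _ : Fin n => Finset.Icc (-(N : ℤ)) N).card = (2 * N + 1) ^ n := by
  simp only [Fintype.card_piFinset, Int.card_Icc, Finset.prod_const, Finset.card_univ,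
    Fintype.card_fin]
  congr 1
  omega

lemma card_le_of_linCoeff_lt {d : ℕ} (a : Fin (d + 1) → ℝ) (N : ℕ)
    (s : Finset (Fin (d + 1) → ℤ))
    (hs : ∀ q ∈ s, |q (Fin.last d)| ≤ N ∧ ∀ i, |linCoeff a q i| < 1 / 2) :
    (s.card : ℝ) ≤ 2 * N + 1 := by
  have : s.card ≤ (Finset.Icc (-(N : ℤ)) N).card :=
    Finset.card_le_card_of_injOn (fun q => q (Fin.last d))
      (fun q hq => Finset.mem_Icc.2 (abs_le.1 (hs q hq).1))
      fun q hq q' hq' h => eq_of_linCoeff_lt h (hs q hq).2 (hs q' hq').2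
  rw [Int.card_Icc] at this
  have : s.card ≤ 2 * N + 1 := by omega
  exact_mod_cast this

lemma volume_nearIntSet_linCoeff_le {d : ℕ} {a : Fin (d + 1) → ℝ} {N : ℕ} {R γ ε : ℝ}
    (hgood : IsGoodHeight a N γ) {q : Fin (d + 1) → ℤ} (hq : q ≠ 0) (hqN : ∀ i, |q i| ≤ N)
    (hlt : ∀ i, |linCoeff a q i| < 1 / 2) (hR : 0 ≤ R) (hγ : 0 < γ) (hε : 0 ≤ ε)
    (hε' : ε ≤ 1 / 2) (hεN : ε ≤ 1 / (4 * N)) :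
    volume (nearIntSet (linCoeff a q) (q (Fin.last d) * a 0) R ε) ≤
      ENNReal.ofReal ((2 * d * R + 2 / γ) * (2 * ε * (2 * R) ^ (d - 1))) := by
  rcases hgood q hq hqN hlt with hj | ⟨hzero, hfar⟩
  · exact volume_nearIntSet_le _ hγ hj _ hR hε hε'
  · have : nearIntSet (linCoeff a q) (q (Fin.last d) * a 0) R ε = ∅ := by
      refine Set.eq_empty_of_forall_notMem fun x hx => ?_
      obtain ⟨m, -, hm⟩ := Set.mem_iUnion.1 hx
      simp only [hzero, Pi.zero_apply, zero_mul, Finset.sum_const_zero, zero_add] at hm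
      linarith [hfar m]
    simp [this]

def approxSet {d n : ℕ} (v : (Fin d → ℝ) → Fin n → ℝ) (R : ℝ) (N : ℕ) (ε : ℝ) :
    Set (Fin d → ℝ) :=
  {x | (∀ i, |x i| ≤ R) ∧ ∃ q : Fin n → ℤ, q ≠ 0 ∧ (∀ i, |(q i : ℝ)| ≤ N) ∧
    ∃ q₀ : ℤ, |∑ i, q i * v x i + q₀| < ε}

lemma approxSet_hyperplanePoint_subset {d : ℕ} (a : Fin (d + 1) → ℝ) (R : ℝ) (N : ℕ) (ε : ℝ) :
    approxSet (hyperplanePoint a) R N ε ⊆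
      ⋃ q ∈ (Fintype.piFinset fun _ : Fin (d + 1) => Finset.Icc (-(N : ℤ)) N).filter (· ≠ 0),
        nearIntSet (linCoeff a q) (q (Fin.last d) * a 0) R ε := by
  rintro x ⟨hbox, q, hq, hqN, q₀, hq₀⟩
  refine Set.mem_biUnion (x := q) ?_
    (Set.mem_iUnion.2 ⟨q₀, hbox, by rwa [← add_assoc, ← sum_mul_hyperplanePoint]⟩)
  simp only [Finset.coe_filter, Fintype.mem_piFinset, Finset.mem_Icc, Set.mem_ofPred_eq]
  exact ⟨fun i => abs_le.1 (by exact_mod_cast hqN i), hq⟩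

lemma volume_approxSet_hyperplanePoint_le {d : ℕ} {a : Fin (d + 1) → ℝ} {R γ ε : ℝ} {N : ℕ}
    (hR : 0 ≤ R) (hγ : 0 < γ) (hε : 0 < ε) (hεN : ε ≤ 1 / (4 * N))
    (hgood : IsGoodHeight a N γ) :
    volume (approxSet (hyperplanePoint a) R N ε) ≤ ENNReal.ofReal
      ((2 * N + 1) ^ (d + 1) * ((2 * d * R + 4) * (2 * ε * (2 * R) ^ (d - 1))) +
        (2 * N + 1) * ((2 * d * R + 2 / γ) * (2 * ε * (2 * R) ^ (d - 1)))) := by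
  have hε' : ε ≤ 1 / 2 := by
    rcases N with _ | N
    · simp at hεN; linarith
    · exact hεN.trans (by gcongr; push_cast; linarith)
  set F := (Fintype.piFinset fun _ : Fin (d + 1) => Finset.Icc (-(N : ℤ)) N).filter (· ≠ 0)
  set B := fun q : Fin (d + 1) → ℤ => nearIntSet (linCoeff a q) (q (Fin.last d) * a 0) R ε
  -- forms with a coefficient `≥ 1/2` are many but steep; the others are few
  set P := fun q : Fin (d + 1) → ℤ => ∃ i, 1 / 2 ≤ |linCoeff a q i|
  have hlarge : ∀ q ∈ F.filter P,
      volume (B q) ≤ ENNReal.ofReal ((2 * d * R + 4) * (2 * ε * (2 * R) ^ (d - 1))) := by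
    intro q hq
    have := volume_nearIntSet_le (linCoeff a q) (by norm_num : (0 : ℝ) < 1 / 2)
      (Finset.mem_filter.1 hq).2 (q (Fin.last d) * a 0) hR hε.le hε'
    norm_num at this ⊢
    exact this
  have hsmall : ∀ q ∈ F.filter (¬ P ·),
      q ≠ 0 ∧ (∀ i, |q i| ≤ N) ∧ ∀ i, |linCoeff a q i| < 1 / 2 := fun q hq => by
    simp only [F, P, Finset.mem_filter, Fintype.mem_piFinset, Finset.mem_Icc, not_exists,
      not_le] at hq
    exact ⟨hq.1.2, fun i => abs_le.2 (hq.1.1 i), hq.2⟩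
  have hcard₁ : ((F.filter P).card : ℝ) ≤ (2 * N + 1) ^ (d + 1) := by
    have : (F.filter P).card ≤ (2 * N + 1) ^ (d + 1) := by
      rw [← card_piFinset_Icc]
      exact (Finset.card_filter_le _ _).trans (Finset.card_filter_le _ _)
    exact_mod_cast this
  have hcard₂ : ((F.filter (¬ P ·)).card : ℝ) ≤ 2 * N + 1 :=
    card_le_of_linCoeff_lt a N _ fun q hq => ⟨(hsmall q hq).2.1 _, (hsmall q hq).2.2⟩
  calc volume (approxSet (hyperplanePoint a) R N ε) ≤ volume (⋃ q ∈ F, B q) :=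
        measure_mono (approxSet_hyperplanePoint_subset a R N ε)
    _ ≤ ∑ q ∈ F, volume (B q) := measure_biUnion_finset_le _ _
    _ = ∑ q ∈ F.filter P, volume (B q) + ∑ q ∈ F.filter (¬ P ·), volume (B q) :=
        (Finset.sum_filter_add_sum_filter_not _ _ _).symm
    _ ≤ ENNReal.ofReal ((F.filter P).card * ((2 * d * R + 4) * (2 * ε * (2 * R) ^ (d - 1)))) +
        ENNReal.ofReal ((F.filter (¬ P ·)).card *
          ((2 * d * R + 2 / γ) * (2 * ε * (2 * R) ^ (d - 1)))) :=
        add_le_add (Finset.sum_le_ofReal_card_mul _ hlarge) (Finset.sum_le_ofReal_card_mul _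
          fun q hq => volume_nearIntSet_linCoeff_le hgood (hsmall q hq).1 (hsmall q hq).2.1
            (hsmall q hq).2.2 hR hγ hε.le hε' hεN)
    _ ≤ _ := by
        rw [← ENNReal.ofReal_add (by positivity) (by positivity)]
        exact ENNReal.ofReal_le_ofReal (add_le_add
          (mul_le_mul_of_nonneg_right hcard₁ (by positivity))
          (mul_le_mul_of_nonneg_right hcard₂ (by positivity)))

lemma ae_not_isSingularVec_of_volume_approxSet_le {d n : ℕ} (v : (Fin d → ℝ) → Fin n → ℝ)
    (h : ∀ R : ℕ, ∃ K : ℝ, ∀ᶠ c in 𝓝[>] (0 : ℝ), ∃ᶠ N : ℕ in atTop,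
      volume (approxSet v R N (c / N ^ n)) ≤ ENNReal.ofReal (K * c)) :
    ∀ᵐ x, ¬ IsSingularVec (v x) := by
  simp only [ae_iff, not_not]
  set S := {x | IsSingularVec (v x)}
  have hbox : ∀ R : ℕ, volume (S ∩ {x | ∀ i, |x i| ≤ R}) = 0 := by
    intro R
    obtain ⟨K, hK⟩ := h R
    have hle : ∀ᶠ c in 𝓝[>] (0 : ℝ),
        volume (S ∩ {x | ∀ i, |x i| ≤ R}) ≤ ENNReal.ofReal (K * c) := by
      filter_upwards [hK, self_mem_nhdsWithin] with c hc (hc0 : 0 < c)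
      set T : ℕ → Set (Fin d → ℝ) := fun k => ⋂ N ≥ k, approxSet v R N (c / N ^ n)
      have hT : Monotone T := fun k k' hkk' =>
        Set.biInter_mono (fun N (hN : k' ≤ N) => hkk'.trans hN) fun _ _ => subset_rfl
      have hsub : S ∩ {x | ∀ i, |x i| ≤ R} ⊆ ⋃ k, T k := by
        rintro x ⟨hx, hxR⟩
        obtain ⟨Q₀, -, hQ₀⟩ := hx c hc0
        refine Set.mem_iUnion.2 ⟨⌈Q₀⌉₊, Set.mem_iInter₂.2 fun N hN => ?_⟩
        obtain ⟨q, hq, q₀, hlt, hqN⟩ := hQ₀ N ((Nat.le_ceil Q₀).trans (by exact_mod_cast hN))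
        exact ⟨hxR, q, hq, hqN, q₀, hlt⟩
      calc _ ≤ volume (⋃ k, T k) := measure_mono hsub
        _ = ⨆ k, volume (T k) := hT.measure_iUnion
        _ ≤ _ := iSup_le fun k => by
            obtain ⟨N, hN, hkN⟩ := (hc.and_eventually (eventually_ge_atTop k)).exists
            exact (measure_mono (Set.biInter_subset_of_mem hkN)).trans hN
    have hlim : Tendsto (fun c => ENNReal.ofReal (K * c)) (𝓝[>] 0) (𝓝 0) := by
      have : Tendsto (fun c => K * c) (𝓝 (0 : ℝ)) (𝓝 0) := by
        simpa using (continuous_const_mul K).tendsto 0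
      simpa using (ENNReal.tendsto_ofReal this).mono_left nhdsWithin_le_nhds
    exact le_antisymm (ge_of_tendsto hlim hle) zero_le
  have hcover : S ⊆ ⋃ R : ℕ, S ∩ {x | ∀ i, |x i| ≤ R} := fun x hx =>
    Set.mem_iUnion.2 ⟨⌈‖x‖⌉₊, hx, fun i =>
      (Real.norm_eq_abs (x i) ▸ norm_le_pi_norm x i).trans (Nat.le_ceil _)⟩
  exact measure_mono_null hcover (measure_iUnion_null hbox)

lemma exists_volume_approxSet_hyperplanePoint_le {d : ℕ} {a : Fin (d + 1) → ℝ}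
    (ha : ∃ i, Irrational (a i)) {R : ℝ} (hR : 0 ≤ R) :
    ∃ K : ℝ, ∀ᶠ c in 𝓝[>] (0 : ℝ), ∃ᶠ N : ℕ in atTop,
      volume (approxSet (hyperplanePoint a) R N (c / N ^ (d + 1))) ≤ ENNReal.ofReal (K * c) := by
  obtain ⟨C, hC⟩ := exists_frequently_isGoodHeight ha
  refine ⟨(3 ^ (d + 1) * (2 * d * R + 4) + 3 * (2 * d * R + 2 * C)) * (2 * (2 * R) ^ (d - 1)), ?_⟩
  filter_upwards [Ioo_mem_nhdsGT (by norm_num : (0 : ℝ) < 1 / 4)] with c ⟨hc0, hc⟩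
  refine (hC.and_eventually (eventually_gt_atTop 0)).mono fun N ⟨⟨γ, hγ, hγC, hgood⟩, hN⟩ => ?_
  have hN1 : (1 : ℝ) ≤ N := by exact_mod_cast hN
  set ε := c / N ^ (d + 1)
  have hNε : N ^ (d + 1) * ε = c := mul_div_cancel₀ _ (by positivity)
  have hNε' : N * ε ≤ c := by
    rw [← hNε]
    exact mul_le_mul_of_nonneg_right (le_self_pow₀ hN1 (by omega)) (by positivity)
  have hεN : ε ≤ 1 / (4 * N) := by
    rw [le_div_iff₀ (by positivity)]; linarith
  refine (volume_approxSet_hyperplanePoint_le hR hγ (by positivity) hεN hgood).trans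
    (ENNReal.ofReal_le_ofReal ?_)
  have h₁ : (2 * N + 1 : ℝ) ^ (d + 1) * ε ≤ 3 ^ (d + 1) * c := by
    rw [← hNε, ← mul_assoc, ← mul_pow]
    exact mul_le_mul_of_nonneg_right (pow_le_pow_left₀ (by positivity) (by linarith) _)
      (by positivity)
  have h₂ : (2 * N + 1 : ℝ) * (2 * d * R + 2 / γ) * ε ≤ 3 * (2 * d * R + 2 * C) * c := by
    have : 2 / γ ≤ 2 * C * N ^ d := by rw [div_eq_mul_one_div]; linarith
    calc (2 * N + 1 : ℝ) * (2 * d * R + 2 / γ) * ε ≤ 3 * N * (2 * d * R + 2 * C * N ^ d) * ε := by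
          gcongr; linarith
      _ = 3 * (2 * d * R) * (N * ε) + 3 * (2 * C) * (N ^ (d + 1) * ε) := by ring
      _ ≤ 3 * (2 * d * R) * c + 3 * (2 * C) * c := by rw [hNε]; gcongr
      _ = _ := by ring
  calc _ = ((2 * N + 1 : ℝ) ^ (d + 1) * ε * (2 * d * R + 4) +
        (2 * N + 1 : ℝ) * (2 * d * R + 2 / γ) * ε) * (2 * (2 * R) ^ (d - 1)) := by ring
    _ ≤ (3 ^ (d + 1) * c * (2 * d * R + 4) + 3 * (2 * d * R + 2 * C) * c) *
        (2 * (2 * R) ^ (d - 1)) := by gcongr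
    _ = _ := by ring

lemma isSingularVec_of_sum_mul_add_eq_zero {n : ℕ} {x : Fin n → ℝ} {q : Fin n → ℤ} (hq : q ≠ 0)
    {q₀ : ℤ} (h : ∑ i, q i * x i + q₀ = 0) : IsSingularVec x := by
  intro c hc
  refine ⟨1 + ∑ i, |(q i : ℝ)|, by positivity, fun Q hQ => ⟨q, hq, q₀, ?_, fun i => ?_⟩⟩
  · have : 0 < Q := lt_of_lt_of_le (by positivity) hQ
    rw [h, abs_zero]
    positivity
  · have := Finset.single_le_sum (fun j _ => abs_nonneg (q j : ℝ)) (Finset.mem_univ i)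
    linarith

lemma isSingularVec_hyperplanePoint {d : ℕ} {a : Fin (d + 1) → ℝ} (ha : ∀ i, ∃ r : ℚ, a i = r)
    (x : Fin d → ℝ) : IsSingularVec (hyperplanePoint a x) := by
  obtain ⟨D, hD, hz⟩ := exists_pos_forall_mul_eq_intCast ha
  choose z hz using hz
  set q : Fin (d + 1) → ℤ := Fin.snoc (fun i => -z i.succ) D
  have hcoeff : linCoeff a q = 0 := funext fun i => by
    simp [q, linCoeff, mul_comm, hz]
  refine isSingularVec_of_sum_mul_add_eq_zero (q := q) (q₀ := -z 0) (fun h => ?_) ?_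
  · have := congrFun h (Fin.last d)
    simp [q] at this
    omega
  · rw [sum_mul_hyperplanePoint, hcoeff]
    simp [q, ← hz 0, mul_comm]

/-- Theorem: writing `n = d + 1 ≥ 1`, for the affine hyperplane
`𝓛_a = {(x, a₀ + a₁x₁ + ⋯ + a_d x_d) : x ∈ ℝ^d} ⊆ ℝ^n`, one has `a ∉ ℚ^n` iff
Lebesgue-a.e. point of `𝓛_a` is not singular. -/
theorem stmt_3 (d : ℕ) (a : Fin (d+1) → ℝ) :
    (¬ ∀ i, ∃ r : ℚ, a i = (r : ℝ)) ↔
      ∀ᵐ x ∂(volume : Measure (Fin d → ℝ)),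
        ¬ IsSingularVec (Fin.snoc x (a 0 + ∑ i : Fin d, a i.succ * x i)) := by
  constructor
  · intro ha
    have hirr : ∃ i, Irrational (a i) := by simpa [Irrational, eq_comm] using ha
    exact ae_not_isSingularVec_of_volume_approxSet_le (hyperplanePoint a) fun R =>
      exists_volume_approxSet_hyperplanePoint_le hirr R.cast_nonneg
  · intro hae ha
    obtain ⟨x, hx⟩ := hae.exists
    exact hx (isSingularVec_hyperplanePoint ha x)
end

section
/- Let n ≥ 1 and let a = (a₁, …, a_n) ∈ ℝ^n, viewed as an n×1 matrix. If a is n-singular, i.e. for every c > 0 there exists Q₀ > 0 such that for every real Q ≥ Q₀ there exist a nonzero integer q and p = (p₁,…,p_n) ∈ ℤ^n with max_{1≤i≤n} |q·a_i + p_i| < c/Q^n and |q| ≤ Q, then a ∈ ℚ^n, i.e. every a_i is rational. -/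
/-!
Suppose `α` is irrational and `(q₁, p₁)` approximates it at height `Q₁` with error
`ε₁ = |q₁ α + p₁| < c / Q₁`, positive by irrationality. An approximation `(q₂, p₂)` at the larger height
`Q₂ = c / ε₁` has error `ε₂ < ε₁`, and the integer `q₁ p₂ - q₂ p₁ = q₁ (q₂ α + p₂) - q₂ (q₁ α + p₁)`
has absolute value `< Q₁ ε₁ + Q₂ ε₁ < 2c ≤ 1`, so it vanishes. The two linear forms are then
proportional, and `ε₂ < ε₁` forces `|q₂| < |q₁|`. Hence approximations at all large heights
cannot exist: `|q|` would descend forever. Each coordinate of an `n`-singular vector has such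
approximations, since `c / Q ^ n ≤ c / Q`.
-/

def IsApproxAt (c Q α : ℝ) (q p : ℤ) : Prop :=
  q ≠ 0 ∧ |(q : ℝ) * α + p| < c / Q ∧ |(q : ℝ)| ≤ Q

lemma IsApproxAt.one_le {c Q α : ℝ} {q p : ℤ} (h : IsApproxAt c Q α q p) : 1 ≤ Q :=
  le_trans (by exact_mod_cast Int.one_le_abs h.1) h.2.2

lemma mul_eq_mul_of_abs_add_abs_lt_one (α : ℝ) {q₁ q₂ p₁ p₂ : ℤ}
    (h : |(q₁ : ℝ) * (q₂ * α + p₂)| + |(q₂ : ℝ) * (q₁ * α + p₁)| < 1) :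
    q₁ * p₂ = q₂ * p₁ := by
  have hcast : ((q₁ * p₂ - q₂ * p₁ : ℤ) : ℝ) = q₁ * (q₂ * α + p₂) - q₂ * (q₁ * α + p₁) := by
    push_cast; ring
  have hlt : |((q₁ * p₂ - q₂ * p₁ : ℤ) : ℝ)| < 1 := hcast ▸ (abs_sub _ _).trans_lt h
  rw [← Int.cast_abs, ← Int.cast_one, Int.cast_lt, Int.abs_lt_one_iff] at hlt
  exact sub_eq_zero.mp hlt

lemma abs_lt_abs_of_mul_eq_mul {K : Type*} [Field K] [LinearOrder K] [IsStrictOrderedRing K]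
    {a b x y : K} (ha : a ≠ 0) (hxy : |x| < |y|) (h : a * x = b * y) : |b| < |a| := by
  by_contra! hab
  have : |a| * |x| < |b| * |y| :=
    calc |a| * |x| < |a| * |y| := mul_lt_mul_of_pos_left hxy (abs_pos.mpr ha)
      _ ≤ |b| * |y| := mul_le_mul_of_nonneg_right hab (abs_nonneg y)
  rw [← abs_mul, ← abs_mul, h] at this
  exact this.false

lemma natAbs_lt_of_isApproxAt {c Q₁ α : ℝ} {q₁ q₂ p₁ p₂ : ℤ} (hc : c ≤ 1 / 2)
    (h₁ : IsApproxAt c Q₁ α q₁ p₁) (h₂ : IsApproxAt c (c / |q₁ * α + p₁|) α q₂ p₂) :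
    q₂.natAbs < q₁.natAbs := by
  have hQ₁ : 0 < Q₁ := one_pos.trans_le h₁.one_le
  have hQ₂ : 0 < c / |q₁ * α + p₁| := one_pos.trans_le h₂.one_le
  obtain ⟨hq₁, hε₁, hq₁Q⟩ := h₁
  obtain ⟨-, hε₂, hq₂Q⟩ := h₂
  set ε₁ := |(q₁ : ℝ) * α + p₁|
  obtain ⟨hc₀, hε₁₀⟩ : 0 < c ∧ 0 < ε₁ := by
    rcases div_pos_iff.mp hQ₂ with h | h
    · exact h
    · exact absurd h.2 (abs_nonneg _).not_gt
  rw [div_div_cancel₀ hc₀.ne'] at hε₂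
  have hε₁Q₁ : Q₁ * ε₁ < c := by rwa [lt_div_iff₀ hQ₁, mul_comm] at hε₁
  have hdet : q₁ * p₂ = q₂ * p₁ := by
    refine mul_eq_mul_of_abs_add_abs_lt_one α ?_
    rw [abs_mul, abs_mul]
    have h₁ : |(q₁ : ℝ)| * |q₂ * α + p₂| < c :=
      calc |(q₁ : ℝ)| * |q₂ * α + p₂| ≤ Q₁ * |q₂ * α + p₂| := by gcongr
        _ < Q₁ * ε₁ := by gcongr
        _ < c := hε₁Q₁
    have h₂ : |(q₂ : ℝ)| * ε₁ ≤ c :=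
      calc |(q₂ : ℝ)| * ε₁ ≤ c / ε₁ * ε₁ := by gcongr
        _ = c := div_mul_cancel₀ c hε₁₀.ne'
    linarith
  have hprop : (q₁ : ℝ) * (q₂ * α + p₂) = q₂ * (q₁ * α + p₁) := by
    have : (q₁ : ℝ) * p₂ = q₂ * p₁ := by exact_mod_cast hdet
    linear_combination this
  have := abs_lt_abs_of_mul_eq_mul (Int.cast_ne_zero.mpr hq₁) hε₂ hprop
  zify
  exact_mod_cast this

lemma Irrational.not_forall_exists_isApproxAt {c α : ℝ} (hα : Irrational α) (hc : c ≤ 1 / 2)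
    (Q₀ : ℝ) : ¬ ∀ Q, Q₀ ≤ Q → ∃ q p, IsApproxAt c Q α q p := by
  intro H
  suffices ∀ m : ℕ, ∀ Q, Q₀ ≤ Q → ∀ q p, q.natAbs = m → ¬ IsApproxAt c Q α q p by
    obtain ⟨q, p, hqp⟩ := H Q₀ le_rfl
    exact this _ Q₀ le_rfl q p rfl hqp
  intro m
  induction m using Nat.strong_induction_on with
  | _ m ih =>
  rintro Q₁ hQ₁ q₁ p₁ rfl h₁
  have hε₁ : 0 < |(q₁ : ℝ) * α + p₁| := abs_pos.mpr ((hα.intCast_mul h₁.1).add_intCast p₁).ne_zero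
  have hQ₂ : Q₀ ≤ c / |(q₁ : ℝ) * α + p₁| := by
    refine hQ₁.trans ((lt_div_comm₀ hε₁ (one_pos.trans_le h₁.one_le)).mp h₁.2.1).le
  obtain ⟨q₂, p₂, h₂⟩ := H _ hQ₂
  exact ih _ (natAbs_lt_of_isApproxAt hc h₁ h₂) _ hQ₂ q₂ p₂ rfl h₂

/-- Theorem: if `a ∈ ℝ^n`, viewed as an `n × 1` matrix, is `n`-singular, then every `a i`
is rational. -/
theorem stmt_12 (n : ℕ) (hn : 1 ≤ n) (a : Fin n → ℝ)
    (h : ∀ c : ℝ, 0 < c → ∃ Q₀ : ℝ, 0 < Q₀ ∧ ∀ Q : ℝ, Q₀ ≤ Q →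
      ∃ q : ℤ, q ≠ 0 ∧ ∃ p : Fin n → ℤ,
        (∀ i, |(q : ℝ) * a i + (p i : ℝ)| < c / Q ^ n) ∧ |(q : ℝ)| ≤ Q) :
    ∀ i, ∃ r : ℚ, a i = (r : ℝ) := by
  intro i
  by_contra hi
  have hα : Irrational (a i) := fun ⟨r, hr⟩ => hi ⟨r, hr.symm⟩
  obtain ⟨Q₀, -, H⟩ := h (1 / 2) one_half_pos
  refine hα.not_forall_exists_isApproxAt le_rfl Q₀ fun Q hQ => ?_
  obtain ⟨q, hq, p, hp, hqQ⟩ := H Q hQ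
  have hQ : 1 ≤ Q := le_trans (by exact_mod_cast Int.one_le_abs hq) hqQ
  refine ⟨q, p i, hq, (hp i).trans_le ?_, hqQ⟩
  gcongr
  exact le_self_pow₀ hQ (by omega)
end

section
/- Let 0 ≤ s < n and let A be an (s+1)×(n−s) real matrix. If A is n-singular, then every point of the affine subspace 𝓛_A is singular; that is, for every x ∈ ℝ^s the vector (x, x̃A) ∈ ℝ^n is singular. -/
/-!
Take `q, p` with `r = Aq + p` small. Then `(p₁, …, p_s, q)` and `p₀` approximate `(x, x̃A)` with
error `x̃ · r`, of size at most `‖x̃‖₁ ‖r‖`. Smallness of `r` forces `‖p‖ ≤ C ‖q‖`, so the height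
grows only by the factor `C`, which a rescaling of `Q` absorbs since the exponents agree.
-/

open MeasureTheory Filter

/-- A real `k×l` matrix `A` is `ω`-singular (here `Q ^ ω` is `Real.rpow`). -/
def IsMatSingular {k l : ℕ} (A : Matrix (Fin k) (Fin l) ℝ) (ω : ℝ) : Prop :=
  ∀ c : ℝ, 0 < c → ∃ Q₀ : ℝ, 0 < Q₀ ∧ ∀ Q : ℝ, Q₀ ≤ Q →
    ∃ q : Fin l → ℤ, q ≠ 0 ∧ ∃ p : Fin k → ℤ,
      (∀ i, |(∑ j, A i j * (q j : ℝ)) + (p i : ℝ)| < c / Q ^ ω) ∧ ∀ j, |(q j : ℝ)| ≤ Q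

/-- The point `(x, x̃A)` of the affine subspace `𝓛_A ⊆ ℝ^n`, `n = s + m`, `x̃ = (1, x)`. -/
noncomputable def affVec {s m : ℕ} (A : Matrix (Fin (s+1)) (Fin m) ℝ) (x : Fin s → ℝ) :
    Fin (s + m) → ℝ :=
  Fin.append x (fun l => ∑ i, (Fin.cons 1 x : Fin (s+1) → ℝ) i * A i l)

theorem abs_sum_mul_le_of_abs_le_s13 {ι : Type*} (t : Finset ι) (a b : ι → ℝ) {B : ℝ}
    (hb : ∀ i ∈ t, |b i| ≤ B) :
    |∑ i ∈ t, a i * b i| ≤ (∑ i ∈ t, |a i|) * B :=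
  calc |∑ i ∈ t, a i * b i| ≤ ∑ i ∈ t, |a i| * |b i| := by
        simpa only [abs_mul] using Finset.abs_sum_le_sum_abs (fun i => a i * b i) t
    _ ≤ ∑ i ∈ t, |a i| * B :=
        Finset.sum_le_sum fun i hi => mul_le_mul_of_nonneg_left (hb i hi) (abs_nonneg _)
    _ = (∑ i ∈ t, |a i|) * B := (Finset.sum_mul _ _ _).symm

theorem IsMatSingular.exists_bounded_approx {k l : ℕ} {A : Matrix (Fin k) (Fin l) ℝ} {ω : ℝ}
    (hω : 0 ≤ ω) (hA : IsMatSingular A ω) :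
    ∃ C : ℝ, 1 ≤ C ∧ ∀ c : ℝ, 0 < c → ∃ Q₀ : ℝ, 0 < Q₀ ∧ ∀ Q : ℝ, Q₀ ≤ Q →
      ∃ q : Fin l → ℤ, q ≠ 0 ∧ ∃ p : Fin k → ℤ,
        (∀ i, |(∑ j, A i j * (q j : ℝ)) + (p i : ℝ)| < c / Q ^ ω) ∧
        (∀ j, |(q j : ℝ)| ≤ Q) ∧ ∀ i, |(p i : ℝ)| ≤ C * Q := by
  set M : ℝ := ∑ i, ∑ j, |A i j|
  have hM : 0 ≤ M := Finset.sum_nonneg fun i _ => Finset.sum_nonneg fun j _ => abs_nonneg _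
  have hrow : ∀ i, ∑ j, |A i j| ≤ M := fun i =>
    Finset.single_le_sum (f := fun i => ∑ j, |A i j|)
      (fun i _ => Finset.sum_nonneg fun j _ => abs_nonneg _) (Finset.mem_univ i)
  refine ⟨M + 1, by linarith, fun c hc => ?_⟩
  obtain ⟨Q₀, hQ₀, hQ⟩ := hA (min c 1) (lt_min hc one_pos)
  refine ⟨max Q₀ 1, by positivity, fun Q hQ₀Q => ?_⟩
  have hQ1 : 1 ≤ Q := le_of_max_le_right hQ₀Q
  have hQω : 0 < Q ^ ω := by positivity
  obtain ⟨q, hq, p, hr, hqQ⟩ := hQ Q (le_of_max_le_left hQ₀Q)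
  have hr1 : ∀ i, |(∑ j, A i j * (q j : ℝ)) + (p i : ℝ)| ≤ 1 := fun i =>
    (hr i).le.trans <| div_le_one_of_le₀ ((min_le_right _ _).trans (Real.one_le_rpow hQ1 hω))
      hQω.le
  refine ⟨q, hq, p, fun i => (hr i).trans_le (by gcongr; exact min_le_left _ _), hqQ, fun i => ?_⟩
  have hAq : |∑ j, A i j * (q j : ℝ)| ≤ M * Q :=
    (abs_sum_mul_le_of_abs_le_s13 _ _ _ fun j _ => hqQ j).trans (by gcongr; exact hrow i)
  calc |(p i : ℝ)| = |((∑ j, A i j * (q j : ℝ)) + p i) - ∑ j, A i j * (q j : ℝ)| := by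
        rw [add_sub_cancel_left]
    _ ≤ |(∑ j, A i j * (q j : ℝ)) + p i| + |∑ j, A i j * (q j : ℝ)| := abs_sub _ _
    _ ≤ 1 + M * Q := add_le_add (hr1 i) hAq
    _ ≤ (M + 1) * Q := by nlinarith

theorem isSingularVec_of_rescaled {n : ℕ} {v : Fin n → ℝ} {C : ℝ} (hC : 0 < C)
    (h : ∀ c : ℝ, 0 < c → ∃ Q₀ : ℝ, 0 < Q₀ ∧ ∀ Q : ℝ, Q₀ ≤ Q →
      ∃ q : Fin n → ℤ, q ≠ 0 ∧ ∃ q₀ : ℤ,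
        |(∑ i, (q i : ℝ) * v i) + (q₀ : ℝ)| < c / Q ^ n ∧ ∀ i, |(q i : ℝ)| ≤ C * Q) :
    IsSingularVec v := by
  intro c hc
  obtain ⟨Q₀, hQ₀, hQ⟩ := h (c / C ^ n) (by positivity)
  refine ⟨C * Q₀, by positivity, fun Q hQQ₀ => ?_⟩
  have hQ_eq : C * (Q / C) = Q := mul_div_cancel₀ Q hC.ne'
  obtain ⟨q, hq, q₀, happrox, hbound⟩ := hQ (Q / C) ((le_div_iff₀' hC).2 hQQ₀)
  refine ⟨q, hq, q₀, ?_, by simpa only [hQ_eq] using hbound⟩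
  rwa [div_pow, div_div_div_cancel_right₀ (pow_pos hC n).ne'] at happrox

theorem affVec_pairing {s m : ℕ} (A : Matrix (Fin (s+1)) (Fin m) ℝ) (x : Fin s → ℝ)
    (q : Fin m → ℤ) (p : Fin (s+1) → ℤ) :
    (∑ k, ((Fin.append (fun i : Fin s => p i.succ) q k : ℤ) : ℝ) * affVec A x k) + (p 0 : ℝ)
      = ∑ i, (Fin.cons 1 x : Fin (s+1) → ℝ) i * ((∑ j, A i j * (q j : ℝ)) + (p i : ℝ)) := by
  simp only [affVec, Fin.sum_univ_add, Fin.append_left, Fin.append_right, Fin.sum_univ_succ,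
    Fin.cons_zero, Fin.cons_succ, mul_add, Finset.mul_sum, Finset.sum_add_distrib, one_mul]
  rw [Finset.sum_comm (γ := Fin m)]
  simp only [mul_comm (q _ : ℝ), mul_comm (p _ : ℝ), mul_assoc]
  ring

theorem stmt_13_general (s m : ℕ) (A : Matrix (Fin (s+1)) (Fin m) ℝ)
    (hA : IsMatSingular A ((s + m : ℕ) : ℝ)) :
    ∀ x : Fin s → ℝ, IsSingularVec (affVec A x) := by
  intro x
  obtain ⟨C, hC, hAC⟩ := hA.exists_bounded_approx (Nat.cast_nonneg _)
  set X : ℝ := ∑ i, |(Fin.cons 1 x : Fin (s+1) → ℝ) i|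
  have hX : 0 ≤ X := Finset.sum_nonneg fun i _ => abs_nonneg _
  refine isSingularVec_of_rescaled (by positivity : (0 : ℝ) < C) fun c hc => ?_
  obtain ⟨Q₀, hQ₀, hQ⟩ := hAC (c / (X + 1)) (by positivity)
  refine ⟨Q₀, hQ₀, fun Q hQ₀Q => ?_⟩
  have hQ_pos : 0 < Q := hQ₀.trans_le hQ₀Q
  obtain ⟨q, hq, p, hr, hqQ, hpQ⟩ := hQ Q hQ₀Q
  simp only [Real.rpow_natCast] at hr
  refine ⟨Fin.append (fun i => p i.succ) q,
    fun h => hq (funext fun j => by simpa using congrFun h (Fin.natAdd s j)), p 0, ?_, ?_⟩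
  · rw [affVec_pairing]
    calc _ ≤ X * (c / (X + 1) / Q ^ (s + m)) :=
          abs_sum_mul_le_of_abs_le_s13 _ _ _ fun i _ => (hr i).le
      _ < (X + 1) * (c / (X + 1) / Q ^ (s + m)) := by gcongr; linarith
      _ = c / Q ^ (s + m) := by field_simp
  · refine Fin.addCases (fun i => ?_) (fun j => ?_)
    · simpa using hpQ i.succ
    · simpa using (hqQ j).trans (le_mul_of_one_le_left hQ_pos.le hC)

/-- Theorem: writing `n = s + m` with `m = n - s ≥ 1`, if `A` is `n`-singular then every
point of `𝓛_A` is singular. -/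
theorem stmt_13 (s m : ℕ) (hm : 1 ≤ m) (A : Matrix (Fin (s+1)) (Fin m) ℝ)
    (hA : IsMatSingular A ((s + m : ℕ) : ℝ)) :
    ∀ x : Fin s → ℝ, IsSingularVec (affVec A x) :=
  stmt_13_general s m A hA
end
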